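/- Let T be a tree on |V| vertices with geodesic distance (Wiener index) S, let m ≥ 1, and for t ≥ 0 let T(t,m) be the exponential tree obtained from T after t steps. Then T(t,m) has (m+1)^t·|V| vertices, and its geodesic distance equals (1+m)^{2t}·S + m(m+1)·∑_{i=0}^{t−1} (1+m)^{2i}·((m+1)^{t−i−1}·|V|)² − m·∑_{i=0}^{t−1} (1+m)^{2i}·(m+1)^{t−i−1}·|V|. -/

import Mathlib

/-- A finite simple graph, bundled with its (finite) vertex type. -/
structure FinSimpleGraph where
  V : Type
  fV : Fintype V
  G : SimpleGraph V

attribute [instance] FinSimpleGraph.fV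

/-- The geodesic distance (Wiener index) of a finite simple graph: the sum of the graph
distances over all unordered pairs of distinct vertices. -/
noncomputable def wienerIndex {V : Type} [Fintype V] (G : SimpleGraph V) : ℕ :=
  (∑ u : V, ∑ v : V, G.dist u v) / 2

/-- One step of the exponential-tree construction: attach `m` new leaf vertices to every
vertex.  The new vertex set is `V ⊕ (V × Fin m)`, where `(v, j)` is adjacent exactly to
`v`, and the adjacency on the `V` component is unchanged. -/
def expTreeStep (m : ℕ) (X : FinSimpleGraph) : FinSimpleGraph :=
  { V := X.V ⊕ (X.V × Fin m), fV := inferInstance,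
    G := SimpleGraph.fromRel fun a b =>
      match a, b with
      | Sum.inl u, Sum.inl v => X.G.Adj u v
      | Sum.inl u, Sum.inr (v, _) => u = v
      | _, _ => False }

/-- The exponential tree `T(t,m)` obtained from the seed after `t` steps. -/
def expTreeIter (m : ℕ) (X : FinSimpleGraph) : ℕ → FinSimpleGraph
  | 0 => X
  | t + 1 => expTreeStep m (expTreeIter m X t)

/-!
A new leaf `(v, j)` of `T(t+1,m)` hangs from `v`, so two distinct vertices `a`, `b` are at distance
`d(base a, base b) + [a is new] + [b is new]`, where `base` forgets the leaf index. Summing over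
ordered pairs, each old vertex is the base of `m + 1` vertices, which gives
`S(t+1) + m·n = (m+1)²·S(t) + m(m+1)·n²` with `n = (m+1)^t·|V|` the order of `T(t,m)`;
unrolling this linear recurrence gives the formula.
-/

open SimpleGraph Finset

theorem eq_pow_mul_add_sum_of_succ_eq {R : Type*} [CommSemiring R] {w f : ℕ → R} {c : R}
    (h : ∀ s, w (s + 1) = c * w s + f s) :
    ∀ t, w t = c ^ t * w 0 + ∑ i ∈ range t, c ^ i * f (t - i - 1)
  | 0 => by simp
  | t + 1 => by
    rw [h, eq_pow_mul_add_sum_of_succ_eq h t, sum_range_succ', mul_add, mul_sum]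
    simp only [Nat.add_sub_add_right, Nat.add_sub_cancel, Nat.sub_zero, pow_zero, one_mul,
      pow_succ', mul_assoc]
    ring

theorem even_sum_sum_of_symm {V : Type*} [Fintype V] (f : V → V → ℕ)
    (hsymm : ∀ u v, f u v = f v u) (hdiag : ∀ u, f u u = 0) : Even (∑ u, ∑ v, f u v) := by
  rw [← ZMod.natCast_eq_zero_iff_even, ← Fintype.sum_prod_type', Nat.cast_sum]
  refine sum_ninvolution Prod.swap (fun p => ?_) (fun p hp hswap => hp ?_)
    (fun _ => mem_univ _) Prod.swap_swap
  · rw [Prod.fst_swap, Prod.snd_swap, hsymm p.2 p.1, CharTwo.add_self_eq_zero]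
  · obtain ⟨u, v⟩ := p
    obtain rfl : v = u := congrArg Prod.fst hswap
    simp [hdiag]

theorem two_mul_wienerIndex {V : Type} [Fintype V] (G : SimpleGraph V) :
    2 * wienerIndex G = ∑ u, ∑ v, G.dist u v :=
  Nat.mul_div_cancel'
    (even_sum_sum_of_symm _ (fun _ _ => G.dist_comm) (fun _ => G.dist_self)).two_dvd

theorem SimpleGraph.Reachable.dist_eq_add_one_of_unique_adj {V : Type*} {G : SimpleGraph V}
    {a w x : V} (hr : G.Reachable a w) (hne : a ≠ w) (hadj : G.Adj x w)
    (huniq : ∀ y, G.Adj y w → y = x) : G.dist a w = G.dist a x + 1 := by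
  refine le_antisymm ?_ ?_
  · simpa [dist_eq_one_iff_adj.mpr hadj] using hadj.reachable.dist_triangle_right a
  · obtain ⟨p, hp⟩ := hr.exists_walk_length_eq_dist
    -- a shortest walk from `a` must enter `w` through `x`
    cases hq : p.reverse with
    | nil => exact absurd rfl hne
    | cons h q =>
      have hlen := congrArg Walk.length hq
      rw [Walk.length_reverse, hp, Walk.length_cons] at hlen
      obtain rfl := huniq _ h.symm
      rw [hlen, dist_comm]
      exact Nat.succ_le_succ (dist_le q)

namespace expTreeStep

variable {m : ℕ} {X : FinSimpleGraph}

theorem adj_inl_inl {u v : X.V} :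
    (expTreeStep m X).G.Adj (.inl u) (.inl v) ↔ X.G.Adj u v := by
  simp [expTreeStep, fromRel_adj, X.G.adj_comm v u, and_iff_right_of_imp X.G.ne_of_adj]

theorem adj_inl_inr {u v : X.V} {j : Fin m} :
    (expTreeStep m X).G.Adj (.inl u) (.inr (v, j)) ↔ u = v := by
  simp [expTreeStep, fromRel_adj]

theorem not_adj_inr_inr {p q : X.V × Fin m} :
    ¬(expTreeStep m X).G.Adj (.inr p) (.inr q) := by
  simp [expTreeStep, fromRel_adj]

theorem eq_inl_of_adj_inr {a : (expTreeStep m X).V} {v : X.V} {j : Fin m}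
    (h : (expTreeStep m X).G.Adj a (.inr (v, j))) : a = .inl v := by
  rcases a with u | p
  · rw [adj_inl_inr.mp h]
  · exact absurd h not_adj_inr_inr

def inlHom (m : ℕ) (X : FinSimpleGraph) : X.G →g (expTreeStep m X).G :=
  ⟨Sum.inl, adj_inl_inl.mpr⟩

def base : (expTreeStep m X).V → X.V := Sum.elim id Prod.fst

def depth : (expTreeStep m X).V → ℕ := Sum.elim 0 1

theorem reachable_inl_base (a : (expTreeStep m X).V) :
    (expTreeStep m X).G.Reachable (.inl (base a)) a := by
  rcases a with u | ⟨u, j⟩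
  · rfl
  · exact (adj_inl_inr.mpr rfl).reachable

theorem dist_base_le (hX : X.G.Preconnected) {a b : (expTreeStep m X).V}
    (p : (expTreeStep m X).G.Walk a b) : X.G.dist (base a) (base b) ≤ p.length := by
  induction p with
  | nil => simp
  | @cons a c b h q ih =>
    have hstep : X.G.dist (base a) (base c) ≤ 1 := by
      rcases a with u | ⟨u, i⟩ <;> rcases c with v | ⟨v, j⟩
      · exact (dist_eq_one_iff_adj.mpr (adj_inl_inl.mp h)).le
      · simp [base, adj_inl_inr.mp h]
      · simp [base, adj_inl_inr.mp h.symm]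
      · exact absurd h not_adj_inr_inr
    calc X.G.dist (base a) (base b) ≤ X.G.dist (base a) (base c) + X.G.dist (base c) (base b) :=
          (hX _ _).dist_triangle_left _
      _ ≤ q.length + 1 := by omega
      _ = (q.cons h).length := rfl

theorem preconnected (hX : X.G.Preconnected) : (expTreeStep m X).G.Preconnected := fun a b =>
  (reachable_inl_base a).symm.trans (((hX _ _).map (inlHom m X)).trans (reachable_inl_base b))

theorem dist_inl_inl (hX : X.G.Preconnected) (u v : X.V) :
    (expTreeStep m X).G.dist (.inl u) (.inl v) = X.G.dist u v := by
  refine le_antisymm ?_ ?_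
  · obtain ⟨p, hp⟩ := (hX u v).exists_walk_length_eq_dist
    calc _ ≤ (p.map (inlHom m X)).length := dist_le _
      _ = X.G.dist u v := by rw [Walk.length_map, hp]
  · obtain ⟨p, hp⟩ := (preconnected hX (.inl u) (.inl v)).exists_walk_length_eq_dist
    exact hp ▸ dist_base_le hX p

theorem dist_inr (hX : X.G.Preconnected) {a : (expTreeStep m X).V} {v : X.V} {j : Fin m}
    (ha : a ≠ .inr (v, j)) :
    (expTreeStep m X).G.dist a (.inr (v, j)) = (expTreeStep m X).G.dist a (.inl v) + 1 :=
  (preconnected hX _ _).dist_eq_add_one_of_unique_adj ha (adj_inl_inr.mpr rfl)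
    fun _ => eq_inl_of_adj_inr

-- Term mode: `rw [dist_comm]` fails here, as `.inr (v, j)` is elaborated at the unfolded type
-- `X.V ⊕ X.V × Fin m`.
theorem inr_dist (hX : X.G.Preconnected) {b : (expTreeStep m X).V} {v : X.V} {j : Fin m}
    (hb : .inr (v, j) ≠ b) :
    (expTreeStep m X).G.dist (.inr (v, j)) b = (expTreeStep m X).G.dist (.inl v) b + 1 :=
  dist_comm.trans <| (dist_inr hX hb.symm).trans <| congrArg (· + 1) dist_comm

theorem dist_of_ne (hX : X.G.Preconnected) {a b : (expTreeStep m X).V} (hab : a ≠ b) :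
    (expTreeStep m X).G.dist a b = X.G.dist (base a) (base b) + depth a + depth b := by
  rcases a with u | ⟨u, i⟩ <;> rcases b with v | ⟨v, j⟩
  · simp [dist_inl_inl hX, base, depth]
  · simp [dist_inr hX hab, dist_inl_inl hX, base, depth]
  · simp [inr_dist hX hab, dist_inl_inl hX, base, depth]
  · rw [dist_inr hX hab, inr_dist hX Sum.inr_ne_inl, dist_inl_inl hX]
    simp [base, depth]

theorem sum_comp_base {M : Type*} [AddCommMonoid M] (f : X.V → M) :
    ∑ a : (expTreeStep m X).V, f (base a) = (m + 1) • ∑ v, f v := by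
  change ∑ a : X.V ⊕ X.V × Fin m, f (base a) = _
  simp [Fintype.sum_sum_type, Fintype.sum_prod_type, base, ← smul_sum, succ_nsmul']

theorem card_V : Fintype.card (expTreeStep m X).V = (m + 1) * Fintype.card X.V := by
  change Fintype.card (X.V ⊕ X.V × Fin m) = _
  simp only [Fintype.card_sum, Fintype.card_prod, Fintype.card_fin]
  ring

theorem sum_depth : ∑ a : (expTreeStep m X).V, depth a = m * Fintype.card X.V := by
  change ∑ a : X.V ⊕ X.V × Fin m, depth a = _
  simp [Fintype.sum_sum_type, depth]
  ring

theorem sum_sum_dist_add (hX : X.G.Preconnected) :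
    ∑ a, ∑ b, (expTreeStep m X).G.dist a b + 2 * (m * Fintype.card X.V) =
      (m + 1) ^ 2 * ∑ u, ∑ v, X.G.dist u v
        + 2 * ((m + 1) * Fintype.card X.V) * (m * Fintype.card X.V) := by
  classical
  have hdist (a b : (expTreeStep m X).V) :
      (expTreeStep m X).G.dist a b + (if a = b then 2 * depth a else 0) =
        X.G.dist (base a) (base b) + depth a + depth b := by
    split_ifs with hab
    · simp [hab, two_mul]
    · simp [dist_of_ne hX hab]
  have hbase : ∑ a, ∑ b, X.G.dist (base a) (base b) = (m + 1) ^ 2 * ∑ u, ∑ v, X.G.dist u v :=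
    calc ∑ a, ∑ b, X.G.dist (base a) (base b)
        = ∑ a, (m + 1) • ∑ v, X.G.dist (base a) v := sum_congr rfl fun _ _ => sum_comp_base _
      _ = (m + 1) • ∑ u, (m + 1) • ∑ v, X.G.dist u v :=
        sum_comp_base fun u => (m + 1) • ∑ v, X.G.dist u v
      _ = (m + 1) ^ 2 * ∑ u, ∑ v, X.G.dist u v := by
        rw [smul_eq_mul, ← smul_sum, smul_eq_mul, sq, mul_assoc]
  have hdepth : ∑ a : (expTreeStep m X).V, ∑ b : (expTreeStep m X).V, (depth a + depth b) =
      2 * ((m + 1) * Fintype.card X.V) * (m * Fintype.card X.V) := by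
    simp only [sum_add_distrib, sum_const, card_univ, smul_eq_mul, ← mul_sum, sum_depth, card_V]
    ring
  calc ∑ a, ∑ b, (expTreeStep m X).G.dist a b + 2 * (m * Fintype.card X.V)
      = ∑ a, ∑ b, ((expTreeStep m X).G.dist a b + (if a = b then 2 * depth a else 0)) := by
        simp [sum_add_distrib, ← mul_sum, sum_depth]
    _ = ∑ a, ∑ b, (X.G.dist (base a) (base b) + (depth a + depth b)) :=
        sum_congr rfl fun a _ => sum_congr rfl fun b _ => by rw [hdist, add_assoc]
    _ = _ := by rw [sum_congr rfl fun _ _ => sum_add_distrib, sum_add_distrib, hbase, hdepth]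

theorem wienerIndex_add_mul_card (hX : X.G.Preconnected) :
    wienerIndex (expTreeStep m X).G + m * Fintype.card X.V =
      (m + 1) ^ 2 * wienerIndex X.G + m * (m + 1) * Fintype.card X.V ^ 2 := by
  have h := sum_sum_dist_add (m := m) hX
  rw [← two_mul_wienerIndex, ← two_mul_wienerIndex] at h
  linarith

end expTreeStep

section

variable {m : ℕ} {X : FinSimpleGraph}

theorem preconnected_expTreeIter (hX : X.G.Preconnected) :
    ∀ t, (expTreeIter m X t).G.Preconnected
  | 0 => hX
  | t + 1 => expTreeStep.preconnected (preconnected_expTreeIter hX t)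

theorem card_expTreeIter :
    ∀ t, Fintype.card (expTreeIter m X t).V = (m + 1) ^ t * Fintype.card X.V
  | 0 => by rw [pow_zero, one_mul]; rfl
  | t + 1 => by
    rw [expTreeIter, expTreeStep.card_V, card_expTreeIter t, pow_succ', mul_assoc]

end

theorem wiener_expTreeIter_general {V : Type} [Fintype V] (G : SimpleGraph V) (hG : G.IsTree)
    (m : ℕ) (t : ℕ) :
    Fintype.card (expTreeIter m ⟨V, inferInstance, G⟩ t).V =
        (m + 1) ^ t * Fintype.card V ∧
    (wienerIndex (expTreeIter m ⟨V, inferInstance, G⟩ t).G : ℤ) =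
      (1 + (m : ℤ)) ^ (2 * t) * (wienerIndex G : ℤ)
        + (m : ℤ) * ((m : ℤ) + 1) *
            ∑ i ∈ Finset.range t,
              (1 + (m : ℤ)) ^ (2 * i) * (((m : ℤ) + 1) ^ (t - i - 1) * (Fintype.card V : ℤ)) ^ 2
        - (m : ℤ) *
            ∑ i ∈ Finset.range t,
              (1 + (m : ℤ)) ^ (2 * i) * (((m : ℤ) + 1) ^ (t - i - 1) * (Fintype.card V : ℤ)) := by
  set X : FinSimpleGraph := ⟨V, inferInstance, G⟩
  refine ⟨card_expTreeIter t, ?_⟩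
  have hstep (s : ℕ) : (wienerIndex (expTreeIter m X (s + 1)).G : ℤ) =
      (1 + m) ^ 2 * wienerIndex (expTreeIter m X s).G
        + (m * (m + 1) * ((m + 1) ^ s * Fintype.card V) ^ 2
          - m * ((m + 1) ^ s * Fintype.card V)) := by
    have h := expTreeStep.wienerIndex_add_mul_card (m := m)
      (preconnected_expTreeIter (m := m) (X := X) hG.connected.preconnected s)
    rw [card_expTreeIter] at h
    have h' := congrArg (Nat.cast : ℕ → ℤ) h
    push_cast at h'
    change ((wienerIndex (expTreeStep m (expTreeIter m X s)).G : ℕ) : ℤ) = _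
    linarith
  rw [eq_pow_mul_add_sum_of_succ_eq (w := fun s => (wienerIndex (expTreeIter m X s).G : ℤ))
    hstep t, add_sub_assoc, mul_sum, mul_sum, ← sum_sub_distrib, pow_mul]
  congr 1
  refine sum_congr rfl fun i _ => ?_
  rw [pow_mul]
  ring

/-- For a tree `T` on `|V|` vertices with Wiener index `S` and `m ≥ 1`, the exponential
tree `T(t,m)` has `(m+1)^t·|V|` vertices, and its Wiener index equals
`(1+m)^{2t}·S + m(m+1)·∑_{i=0}^{t−1} (1+m)^{2i}·((m+1)^{t−i−1}·|V|)²
 − m·∑_{i=0}^{t−1} (1+m)^{2i}·(m+1)^{t−i−1}·|V|`. -/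
theorem wiener_expTreeIter {V : Type} [Fintype V] (G : SimpleGraph V) (hG : G.IsTree)
    (m : ℕ) (hm : 1 ≤ m) (t : ℕ) :
    Fintype.card (expTreeIter m ⟨V, inferInstance, G⟩ t).V =
        (m + 1) ^ t * Fintype.card V ∧
    (wienerIndex (expTreeIter m ⟨V, inferInstance, G⟩ t).G : ℤ) =
      (1 + (m : ℤ)) ^ (2 * t) * (wienerIndex G : ℤ)
        + (m : ℤ) * ((m : ℤ) + 1) *
            ∑ i ∈ Finset.range t,
              (1 + (m : ℤ)) ^ (2 * i) * (((m : ℤ) + 1) ^ (t - i - 1) * (Fintype.card V : ℤ)) ^ 2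
        - (m : ℤ) *
            ∑ i ∈ Finset.range t,
              (1 + (m : ℤ)) ^ (2 * i) * (((m : ℤ) + 1) ^ (t - i - 1) * (Fintype.card V : ℤ)) :=
  wiener_expTreeIter_general G hG m t
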